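/- arXiv:2311.02418 — 3 statements merged into one kernel-verified Lean document; each statement's English description precedes it below -/
import Mathlib

section
/- In any locally κ-coherent exact structure on a κ-accessible additive category A, the full subcategory A_{<κ} of κ-presentable objects is closed under extensions in A: if 0→A¹→A²→A³→0 is an admissible short exact sequence in A with A¹ and A³ κ-presentable, then A² is κ-presentable. Consequently A_{<κ} inherits an exact category structure from A (the admissible short exact sequences of A_{<κ} being those admissible short exact sequences of A with all terms in A_{<κ}). -/
universe w v u

open CategoryTheory CategoryTheory.Limits Opposite

namespace LocCoh

/-- A preorder is `κ`-directed if every subset of cardinality `< κ` has an upper bound. -/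
def IsCardinalDirected (κ : Cardinal.{w}) (J : Type w) [Preorder J] : Prop :=
  ∀ s : Set J, Cardinal.mk s < κ → ∃ j : J, ∀ i ∈ s, i ≤ j

section

variable {A : Type u} [Category.{v} A]

/-- An object `S` is `κ`-presentable if `Hom(S, -)` preserves `κ`-directed colimits. -/
def IsPresentable (κ : Cardinal.{v}) (S : A) : Prop :=
  ∀ (J : Type v) (_ : Preorder J), IsCardinalDirected κ J →
    Nonempty (PreservesColimitsOfShape J (coyoneda.obj (op S)))

end

/-- A category is `κ`-accessible if it has `κ`-directed colimits and a set of
`κ`-presentable objects of which every object is a `κ`-directed colimit. -/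
structure IsAccessibleCat (κ : Cardinal.{v}) (A : Type u) [Category.{v} A] : Prop where
  hasColimitsOfShape : ∀ (J : Type v) (_ : Preorder J), IsCardinalDirected κ J →
    HasColimitsOfShape J A
  exists_generators : ∃ G : Set A, Small.{v} ↥G ∧ (∀ X ∈ G, IsPresentable κ X) ∧
    ∀ X : A, ∃ (J : Type v) (_ : Preorder J) (_ : IsCardinalDirected κ J)
      (F : J ⥤ A) (c : Cocone F) (_ : Nonempty (IsColimit c)), c.pt = X ∧ ∀ j, F.obj j ∈ G

section

variable {A : Type u} [Category.{v} A] [Preadditive A]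

/-- A kernel-cokernel pair: `S.f` is a kernel of `S.g` and `S.g` is a cokernel of `S.f`. -/
def IsKernelCokernelPair (S : ShortComplex A) : Prop :=
  Nonempty (IsLimit (KernelFork.ofι S.f S.zero)) ∧
  Nonempty (IsColimit (CokernelCofork.ofπ S.g S.zero))

/-- `f` is an admissible monomorphism for the class `E` of short exact sequences. -/
def AdmissibleMonoOf (E : Set (ShortComplex A)) {X Y : A} (f : X ⟶ Y) : Prop :=
  ∃ (Z : A) (g : Y ⟶ Z) (w : f ≫ g = 0), ShortComplex.mk f g w ∈ E

/-- `g` is an admissible epimorphism for the class `E` of short exact sequences. -/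
def AdmissibleEpiOf (E : Set (ShortComplex A)) {Y Z : A} (g : Y ⟶ Z) : Prop :=
  ∃ (X : A) (f : X ⟶ Y) (w : f ≫ g = 0), ShortComplex.mk f g w ∈ E

/-- Quillen's axioms for an exact structure (following Bühler): the distinguished class
of kernel-cokernel pairs is closed under isomorphisms, contains the identities as
admissible monos/epis, admissible monos/epis are closed under composition, and admissible
monos (resp. epis) admit pushouts (resp. pullbacks) along arbitrary morphisms, which are
again admissible monos (resp. epis). -/
structure IsExactStructure (E : Set (ShortComplex A)) : Prop where
  kerCoker : ∀ S ∈ E, IsKernelCokernelPair S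
  mem_of_iso : ∀ (S T : ShortComplex A), (S ≅ T) → S ∈ E → T ∈ E
  id_mono : ∀ X : A, AdmissibleMonoOf E (𝟙 X)
  id_epi : ∀ X : A, AdmissibleEpiOf E (𝟙 X)
  mono_comp : ∀ {X Y Z : A} (f : X ⟶ Y) (g : Y ⟶ Z),
    AdmissibleMonoOf E f → AdmissibleMonoOf E g → AdmissibleMonoOf E (f ≫ g)
  epi_comp : ∀ {X Y Z : A} (f : X ⟶ Y) (g : Y ⟶ Z),
    AdmissibleEpiOf E f → AdmissibleEpiOf E g → AdmissibleEpiOf E (f ≫ g)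
  pushout_mono : ∀ {X Y Z : A} (f : X ⟶ Y), AdmissibleMonoOf E f → ∀ (h : X ⟶ Z),
    ∃ (W : A) (h' : Y ⟶ W) (f' : Z ⟶ W), IsPushout f h h' f' ∧ AdmissibleMonoOf E f'
  pullback_epi : ∀ {Y Z X : A} (g : Y ⟶ Z), AdmissibleEpiOf E g → ∀ (h : X ⟶ Z),
    ∃ (W : A) (g' : W ⟶ X) (h' : W ⟶ Y), IsPullback g' h' h g ∧ AdmissibleEpiOf E g'

/-- `S` is a `κ`-directed colimit, computed in the category of three-term complexes,
of short exact sequences from `E` all of whose terms are `κ`-presentable. -/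
def IsColimitOfPresentableSESs (κ : Cardinal.{v}) (E : Set (ShortComplex A))
    (S : ShortComplex A) : Prop :=
  ∃ (J : Type v) (_ : Preorder J) (_ : IsCardinalDirected κ J)
    (F : J ⥤ ShortComplex A) (c : Cocone F) (_ : Nonempty (IsColimit c)),
    c.pt = S ∧ ∀ j : J, F.obj j ∈ E ∧
      IsPresentable κ (F.obj j).X₁ ∧ IsPresentable κ (F.obj j).X₂ ∧
      IsPresentable κ (F.obj j).X₃

/-- An exact structure is locally `κ`-coherent if its admissible short exact sequences
are exactly the `κ`-directed colimits of admissible short exact sequences with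
`κ`-presentable terms. -/
def IsLocallyCoherent (κ : Cardinal.{v}) (E : Set (ShortComplex A)) : Prop :=
  ∀ S : ShortComplex A, S ∈ E ↔ IsColimitOfPresentableSESs κ E S

end

/-- The full subcategory of `κ`-presentable objects. -/
abbrev PresSub (κ : Cardinal.{v}) (A : Type u) [Category.{v} A] :=
  ObjectProperty.FullSubcategory (fun X : A => IsPresentable κ X)

section

variable (κ : Cardinal.{v}) (A : Type u) [Category.{v} A] [Preadditive A]

/-- The inclusion of short complexes of `κ`-presentable objects into short
complexes of `A`. -/
noncomputable def inclSC : ShortComplex (PresSub κ A) ⥤ ShortComplex A :=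
  (ObjectProperty.ι _).mapShortComplex

variable {κ A}

/-- The exact structure inherited on the subcategory of `κ`-presentable objects. -/
def restrictSES (E : Set (ShortComplex A)) : Set (ShortComplex (PresSub κ A)) :=
  {S₀ | (inclSC κ A).obj S₀ ∈ E}

/-- The class of short complexes of `A` which are `κ`-directed colimits of short exact
sequences belonging to a class `E₀` of short exact sequences of `κ`-presentable objects. -/
def inducedSES (E₀ : Set (ShortComplex (PresSub κ A))) : Set (ShortComplex A) :=
  {S | ∃ (J : Type v) (_ : Preorder J) (_ : IsCardinalDirected κ J)
    (F : J ⥤ ShortComplex (PresSub κ A)) (c : Cocone (F ⋙ inclSC κ A))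
    (_ : Nonempty (IsColimit c)), c.pt = S ∧ ∀ j, F.obj j ∈ E₀}

end

end LocCoh

open LocCoh

/-!
Write an admissible sequence `S = (X₁ ⟶ X₂ ⟶ X₃)` as a `κ`-directed colimit of admissible
sequences `Sⱼ` with `κ`-presentable terms. Since `X₃` is presentable, `𝟙 X₃` factors as
`σ ≫ (Sⱼ.X₃ ⟶ X₃)` for some `j`. Pulling `Sⱼ` back along `σ` and pushing the result out along
`Sⱼ.X₁ ⟶ X₁` gives an admissible sequence `X₁ ⟶ P ⟶ X₃` with `P` presentable: the pullback is
the kernel of the admissible epimorphism `Sⱼ.X₂ ⊞ X₃ ⟶ Sⱼ.X₃`, the kernel of an admissible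
epimorphism between presentable objects is a retract of the first term of one of the sequences
presenting it, and presentable objects are closed under finite colimits. The cocone provides a map `P ⟶ X₂` over `X₃`, so the pullback
of `X₂ ⟶ X₃` and `P ⟶ X₃` is at the same time `X₁ ⊞ P` and an extension of `X₂` by `X₁`; hence
`X₂` is the cokernel of a map between presentable objects.

Closure under kernels of admissible epimorphisms, cokernels of admissible monomorphisms and
extensions is all that the inherited exact structure on `A_{<κ}` needs.
-/

namespace CategoryTheory

section Presentable

variable {A : Type u} [Category.{v} A] {κ : Cardinal.{v}} [Fact κ.IsRegular]

lemma isCardinalPresentable_of_isColimit_of_finCategory {K : Type} [SmallCategory K]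
    [FinCategory K] {Y : K ⥤ A} {c : Cocone Y} (hc : IsColimit c)
    (hY : ∀ k, IsCardinalPresentable (Y.obj k) κ) : IsCardinalPresentable c.pt κ :=
  isCardinalPresentable_of_isColimit c hc κ
    (hasCardinalLT_of_finite _ κ (Fact.out : κ.IsRegular).aleph0_le)

lemma IsPushout.isCardinalPresentable {X Y Z W : A} {f : X ⟶ Y} {g : X ⟶ Z} {h : Y ⟶ W}
    {i : Z ⟶ W} (sq : IsPushout f g h i) [IsCardinalPresentable X κ]
    [IsCardinalPresentable Y κ] [IsCardinalPresentable Z κ] : IsCardinalPresentable W κ :=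
  isCardinalPresentable_of_isColimit_of_finCategory sq.isColimit
    (by rintro (_ | _ | _) <;> assumption)

lemma isCardinalPresentable_of_isColimit_cokernelCofork [HasZeroMorphisms A] {X Y Z : A}
    {f : X ⟶ Y} {g : Y ⟶ Z} {w : f ≫ g = 0} (hg : IsColimit (CokernelCofork.ofπ g w))
    [IsCardinalPresentable X κ] [IsCardinalPresentable Y κ] : IsCardinalPresentable Z κ :=
  isCardinalPresentable_of_isColimit_of_finCategory hg (by rintro (_ | _) <;> assumption)

instance isCardinalPresentable_biprod [HasZeroMorphisms A] {X Y : A} [HasBinaryBiproduct X Y]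
    [IsCardinalPresentable X κ] [IsCardinalPresentable Y κ] :
    IsCardinalPresentable (X ⊞ Y) κ :=
  isCardinalPresentable_of_isColimit_of_finCategory (BinaryBiproduct.isColimit X Y)
    (by rintro ⟨_ | _⟩ <;> assumption)

end Presentable

section ZeroMorphisms

variable {A : Type u} [Category.{v} A] [HasZeroMorphisms A]

noncomputable def IsPullback.isLimitKernelForkFst {W X₁ X₂ X₃ Y : A} {fst : W ⟶ Y}
    {snd : W ⟶ X₂} {h : Y ⟶ X₃} {g : X₂ ⟶ X₃} (sq : IsPullback fst snd h g) {f : X₁ ⟶ X₂}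
    {w : f ≫ g = 0} (hf : IsLimit (KernelFork.ofι f w)) :
    IsLimit (KernelFork.ofι (sq.lift 0 f (by simp [w])) (sq.lift_fst _ _ _)) :=
  have lift' {T : A} (t : T ⟶ W) (ht : t ≫ fst = 0) :=
    KernelFork.IsLimit.lift' hf (t ≫ snd) (by simp [← sq.w, reassoc_of% ht])
  KernelFork.IsLimit.ofι _ _
    (fun t ht => (lift' t ht).1)
    (fun t ht => sq.hom_ext (by simp [ht]) (by simpa using (lift' t ht).2))
    (fun t ht m hm => Fork.IsLimit.hom_ext hf (by
      simpa [show (lift' t ht).1 ≫ f = t ≫ snd from (lift' t ht).2]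
        using congrArg (· ≫ snd) hm))

noncomputable def IsPushout.isColimitCokernelCoforkInr {X₁ X₂ X₃ Y W : A} {f : X₁ ⟶ X₂}
    {h : X₁ ⟶ Y} {inl : X₂ ⟶ W} {inr : Y ⟶ W} (sq : IsPushout f h inl inr) {g : X₂ ⟶ X₃}
    {w : f ≫ g = 0} (hg : IsColimit (CokernelCofork.ofπ g w)) :
    IsColimit (CokernelCofork.ofπ (sq.desc g 0 (by simp [w])) (sq.inr_desc _ _ _)) :=
  have desc' {T : A} (t : W ⟶ T) (ht : inr ≫ t = 0) :=
    CokernelCofork.IsColimit.desc' hg (inl ≫ t) (by simp [reassoc_of% sq.w, ht])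
  CokernelCofork.IsColimit.ofπ _ _
    (fun t ht => (desc' t ht).1)
    (fun t ht => sq.hom_ext (by simpa using (desc' t ht).2) (by simp [ht]))
    (fun t ht m hm => Cofork.IsColimit.hom_ext hg (by
      simpa [show g ≫ (desc' t ht).1 = inl ≫ t from (desc' t ht).2]
        using congrArg (inl ≫ ·) hm))

lemma isPullback_biprod_map_fst [HasBinaryBiproducts A] {B B' : A} (g : B ⟶ B') (X : A) :
    IsPullback (biprod.map g (𝟙 X)) biprod.fst biprod.fst g :=
  IsPullback.of_isLimit (c := PullbackCone.mk (biprod.map g (𝟙 X)) biprod.fst (by simp))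
    (PullbackCone.IsLimit.mk _ (fun s => biprod.lift s.snd (s.fst ≫ biprod.snd))
      (fun s => by ext <;> simp [← s.condition])
      (fun s => by simp)
      (fun s m h₁ h₂ => by
        ext
        · simpa using h₂
        · simpa using congrArg (· ≫ biprod.snd) h₁))

end ZeroMorphisms

noncomputable def ShortComplex.splittingOfIsLimitOfSection {A : Type u} [Category.{v} A]
    [Preadditive A] {S : ShortComplex A} (hS : IsLimit (KernelFork.ofι S.f S.zero))
    (s : S.X₃ ⟶ S.X₂) (s_g : s ≫ S.g = 𝟙 S.X₃) : S.Splitting :=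
  let r := KernelFork.IsLimit.lift' hS (𝟙 S.X₂ - S.g ≫ s) (by simp [s_g])
  have hr : r.1 ≫ S.f = 𝟙 S.X₂ - S.g ≫ s := r.2
  { r := r.1
    s := s
    f_r := Fork.IsLimit.hom_ext hS (by simp [hr])
    s_g := s_g
    id := by simp [hr] }

end CategoryTheory

namespace LocCoh

section Presentability

variable {κ : Cardinal.{v}} [Fact κ.IsRegular] {J : Type v} [Preorder J]

lemma IsCardinalDirected.isCardinalFiltered (hJ : IsCardinalDirected κ J) :
    IsCardinalFiltered J κ :=
  isCardinalFiltered_preorder J κ fun K s hK => by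
    obtain ⟨j, hj⟩ := hJ (Set.range s) (Cardinal.mk_range_le.trans_lt hK)
    exact ⟨j, fun k => hj _ (Set.mem_range_self k)⟩

lemma isCardinalDirected_of_isCardinalFiltered [IsCardinalFiltered J κ] :
    IsCardinalDirected κ J := fun s hs =>
  ⟨IsCardinalFiltered.max ((↑) : s → J) ((hasCardinalLT_iff_cardinal_mk_lt _ _).2 hs),
    fun i hi => leOfHom (IsCardinalFiltered.toMax ((↑) : s → J) _ ⟨i, hi⟩)⟩

/-- Every `κ`-filtered category receives a final functor from a `κ`-directed poset, so testing
presentability on `κ`-directed preorders suffices. -/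
lemma isPresentable_iff_isCardinalPresentable {A : Type u} [Category.{v} A] (S : A) :
    IsPresentable κ S ↔ IsCardinalPresentable S κ := by
  constructor
  · intro hS
    refine ⟨fun J _ _ => ?_⟩
    obtain ⟨α, _, _, F, _⟩ := IsCardinalFiltered.exists_cardinal_directed J κ
    have := (hS α inferInstance isCardinalDirected_of_isCardinalFiltered).some
    exact Functor.Final.preservesColimitsOfShape_of_final F _
  · intro hS J _ hJ
    have := hJ.isCardinalFiltered
    exact ⟨Functor.preservesColimitsOfShape_of_isCardinalAccessible _ κ J⟩

end Presentability

section ExactStructure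

variable {A : Type u} [Category.{v} A] [Preadditive A] {E : Set (ShortComplex A)}

lemma IsKernelCokernelPair.of_map {B : Type*} [Category B] [Preadditive B] (F : A ⥤ B)
    [F.PreservesZeroMorphisms] [F.Full] [F.Faithful] {S : ShortComplex A}
    (h : IsKernelCokernelPair (S.map F)) : IsKernelCokernelPair S :=
  ⟨⟨isLimitOfReflects F ((isLimitMapConeForkEquiv' F S.zero).symm h.1.some)⟩,
    ⟨isColimitOfReflects F ((isColimitMapCoconeCoforkEquiv' F S.zero).symm h.2.some)⟩⟩

namespace IsExactStructure

variable (hE : IsExactStructure E)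
include hE

lemma mem_of_isLimit_kernelFork {S : ShortComplex A} (hS : S ∈ E) {K : A} {k : K ⟶ S.X₂}
    {w : k ≫ S.g = 0} (hk : IsLimit (KernelFork.ofι k w)) : ShortComplex.mk k S.g w ∈ E :=
  hE.mem_of_iso S _ (ShortComplex.isoMk
    (IsLimit.conePointUniqueUpToIso (hE.kerCoker S hS).1.some hk) (Iso.refl _) (Iso.refl _)
    (by rw [Iso.refl_hom, Category.comp_id]
        exact IsLimit.conePointUniqueUpToIso_hom_comp _ hk .zero)
    (by simp)) hS

lemma mem_of_isColimit_cokernelCofork {S : ShortComplex A} (hS : S ∈ E) {Q : A}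
    {q : S.X₂ ⟶ Q} {w : S.f ≫ q = 0} (hq : IsColimit (CokernelCofork.ofπ q w)) :
    ShortComplex.mk S.f q w ∈ E :=
  hE.mem_of_iso S _ (ShortComplex.isoMk (Iso.refl _) (Iso.refl _)
    (IsColimit.coconePointUniqueUpToIso (hE.kerCoker S hS).2.some hq) (by simp)
    (by rw [Iso.refl_hom, Category.id_comp]
        exact (IsColimit.comp_coconePointUniqueUpToIso_hom (hE.kerCoker S hS).2.some hq
          .one).symm)) hS

lemma admissibleEpiOf_iso_hom_comp {W W' Z : A} (e : W ≅ W') {g : W' ⟶ Z}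
    (hg : AdmissibleEpiOf E g) : AdmissibleEpiOf E (e.hom ≫ g) := by
  obtain ⟨K, k, w, hk⟩ := hg
  exact ⟨K, k ≫ e.inv, by simp [w], hE.mem_of_iso (ShortComplex.mk k g w) _
    (ShortComplex.isoMk (Iso.refl _) e.symm (Iso.refl _) (by simp) (by simp)) hk⟩

lemma admissibleMonoOf_comp_iso_hom {X W W' : A} {f : X ⟶ W} (e : W ≅ W')
    (hf : AdmissibleMonoOf E f) : AdmissibleMonoOf E (f ≫ e.hom) := by
  obtain ⟨Q, q, w, hq⟩ := hf
  exact ⟨Q, e.inv ≫ q, by simp [w], hE.mem_of_iso (ShortComplex.mk f q w) _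
    (ShortComplex.isoMk (Iso.refl _) e (Iso.refl _) (by simp) (by simp)) hq⟩

lemma admissibleEpiOf_of_isPullback {W X Y Z : A} {fst : W ⟶ Y} {snd : W ⟶ X} {h : Y ⟶ Z}
    {g : X ⟶ Z} (sq : IsPullback fst snd h g) (hg : AdmissibleEpiOf E g) :
    AdmissibleEpiOf E fst := by
  obtain ⟨W', fst', snd', sq', hfst'⟩ := hE.pullback_epi g hg h
  simpa using hE.admissibleEpiOf_iso_hom_comp (sq.isoIsPullback _ _ sq') hfst'

lemma admissibleMonoOf_of_isPushout {W X Y Z : A} {f : X ⟶ Y} {h : X ⟶ Z} {inl : Y ⟶ W}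
    {inr : Z ⟶ W} (sq : IsPushout f h inl inr) (hf : AdmissibleMonoOf E f) :
    AdmissibleMonoOf E inr := by
  obtain ⟨W', inl', inr', sq', hinr'⟩ := hE.pushout_mono f hf h
  simpa using hE.admissibleMonoOf_comp_iso_hom (sq.isoIsPushout _ _ sq').symm hinr'

lemma mem_of_isPullback {S : ShortComplex A} (hS : S ∈ E) {W Y : A} {fst : W ⟶ Y}
    {snd : W ⟶ S.X₂} {h : Y ⟶ S.X₃} (sq : IsPullback fst snd h S.g) :
    ShortComplex.mk (sq.lift 0 S.f (by simp)) fst (sq.lift_fst _ _ _) ∈ E := by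
  obtain ⟨K, k, w, hk⟩ := hE.admissibleEpiOf_of_isPullback sq ⟨_, S.f, S.zero, hS⟩
  exact hE.mem_of_isLimit_kernelFork hk (sq.isLimitKernelForkFst (hE.kerCoker S hS).1.some)

lemma mem_of_isPushout {S : ShortComplex A} (hS : S ∈ E) {W Y : A} {h : S.X₁ ⟶ Y}
    {inl : S.X₂ ⟶ W} {inr : Y ⟶ W} (sq : IsPushout S.f h inl inr) :
    ShortComplex.mk inr (sq.desc S.g 0 (by simp)) (sq.inr_desc _ _ _) ∈ E := by
  obtain ⟨Q, q, w, hq⟩ := hE.admissibleMonoOf_of_isPushout sq ⟨_, S.g, S.zero, hS⟩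
  exact hE.mem_of_isColimit_cokernelCofork hq
    (sq.isColimitCokernelCoforkInr (hE.kerCoker S hS).2.some)

open ZeroObject in
lemma admissibleEpiOf_zero [HasZeroObject A] (X : A) : AdmissibleEpiOf E (0 : X ⟶ 0) := by
  obtain ⟨Z, g, w, hg⟩ := hE.id_mono X
  exact ⟨X, 𝟙 X, by simp, hE.mem_of_isColimit_cokernelCofork hg
    (CokernelCofork.IsColimit.ofEpiOfIsZero _ inferInstance (isZero_zero A))⟩

variable [HasZeroObject A] [HasBinaryBiproducts A]

lemma admissibleEpiOf_biprod_desc {B X Z : A} {g : B ⟶ Z} (hg : AdmissibleEpiOf E g)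
    (u : X ⟶ Z) : AdmissibleEpiOf E (biprod.desc g u) := by
  have hfst : AdmissibleEpiOf E (biprod.fst : Z ⊞ X ⟶ Z) :=
    hE.admissibleEpiOf_of_isPullback (IsPullback.of_has_biproduct Z X)
      (hE.admissibleEpiOf_zero X)
  have : biprod.desc g u = biprod.map g (𝟙 X) ≫ (Biprod.unipotentLower u).hom ≫ biprod.fst := by
    ext <;> simp
  rw [this]
  exact hE.epi_comp _ _ (hE.admissibleEpiOf_of_isPullback (isPullback_biprod_map_fst g X) hg)
    (hE.admissibleEpiOf_iso_hom_comp _ hfst)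

lemma exists_kernel_biprod_desc_isPullback {S : ShortComplex A} (hS : S ∈ E) {Y : A}
    (h : Y ⟶ S.X₃) :
    ∃ (W : A) (k : W ⟶ S.X₂ ⊞ Y) (w : k ≫ biprod.desc S.g (-h) = 0),
      ShortComplex.mk k _ w ∈ E ∧ IsPullback (k ≫ biprod.snd) (k ≫ biprod.fst) h S.g := by
  obtain ⟨W, k, w, hk⟩ := hE.admissibleEpiOf_biprod_desc ⟨_, S.f, S.zero, hS⟩ (-h)
  have sq : CommSq (k ≫ biprod.fst) (k ≫ biprod.snd) S.g h :=
    ⟨by rw [← sub_eq_zero]; simpa [biprod.desc_eq, sub_eq_add_neg] using w⟩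
  have hk' : IsLimit sq.kernelFork := (hE.kerCoker _ hk).1.some.ofIsoLimit
    (Fork.ext (Iso.refl _) (by ext <;> simp))
  exact ⟨W, k, w, hk, IsPullback.flip ⟨sq, ⟨sq.isLimitEquivIsLimitKernelFork.symm hk'⟩⟩⟩

end IsExactStructure

end ExactStructure

section Coherent

variable {A : Type u} [Category.{v} A] {κ : Cardinal.{v}} [Fact κ.IsRegular]

lemma exists_sections_of_isColimit [HasZeroMorphisms A] {J : Type v} [SmallCategory J] [IsCardinalFiltered J κ]
    [HasColimitsOfShape J A] {F : J ⥤ ShortComplex A} {c : Cocone F} (hc : IsColimit c)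
    [IsCardinalPresentable c.pt.X₂ κ] [IsCardinalPresentable c.pt.X₃ κ] :
    ∃ (j : J) (σ₂ : c.pt.X₂ ⟶ (F.obj j).X₂) (σ₃ : c.pt.X₃ ⟶ (F.obj j).X₃),
      σ₂ ≫ (c.ι.app j).τ₂ = 𝟙 _ ∧ σ₃ ≫ (c.ι.app j).τ₃ = 𝟙 _ ∧
        σ₂ ≫ (F.obj j).g = c.pt.g ≫ σ₃ := by
  have := isFiltered_of_isCardinalFiltered J κ
  have w₂ {i i' : J} (u : i ⟶ i') : (F.map u).τ₂ ≫ (c.ι.app i').τ₂ = (c.ι.app i).τ₂ := by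
    rw [← ShortComplex.comp_τ₂, c.w]
  have w₃ {i i' : J} (u : i ⟶ i') : (F.map u).τ₃ ≫ (c.ι.app i').τ₃ = (c.ι.app i).τ₃ := by
    rw [← ShortComplex.comp_τ₃, c.w]
  have hc₃ := isColimitOfPreserves ShortComplex.π₃ hc
  obtain ⟨j₂, (σ₂ : c.pt.X₂ ⟶ (F.obj j₂).X₂), hσ₂⟩ :=
    IsCardinalPresentable.exists_hom_of_isColimit (X := c.pt.X₂) κ
      (isColimitOfPreserves ShortComplex.π₂ hc) (𝟙 _)
  obtain ⟨j₃, (σ₃ : c.pt.X₃ ⟶ (F.obj j₃).X₃), hσ₃⟩ :=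
    IsCardinalPresentable.exists_hom_of_isColimit (X := c.pt.X₃) κ hc₃ (𝟙 _)
  change σ₂ ≫ (c.ι.app j₂).τ₂ = 𝟙 _ at hσ₂
  change σ₃ ≫ (c.ι.app j₃).τ₃ = 𝟙 _ at hσ₃
  let j := IsFiltered.max j₂ j₃
  have hσ₂' : (σ₂ ≫ (F.map (IsFiltered.leftToMax j₂ j₃)).τ₂) ≫ (c.ι.app j).τ₂ = 𝟙 _ := by
    rw [Category.assoc, w₂, hσ₂]
  have hσ₃' : (σ₃ ≫ (F.map (IsFiltered.rightToMax j₂ j₃)).τ₃) ≫ (c.ι.app j).τ₃ = 𝟙 _ := by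
    rw [Category.assoc, w₃, hσ₃]
  generalize σ₂ ≫ (F.map (IsFiltered.leftToMax j₂ j₃)).τ₂ = σ₂' at hσ₂'
  generalize σ₃ ≫ (F.map (IsFiltered.rightToMax j₂ j₃)).τ₃ = σ₃' at hσ₃'
  obtain ⟨k, u, hu⟩ := IsCardinalPresentable.exists_eq_of_isColimit' κ hc₃
    (σ₂' ≫ (F.obj j).g) (c.pt.g ≫ σ₃') (by
      change (σ₂' ≫ (F.obj j).g) ≫ (c.ι.app j).τ₃ = (c.pt.g ≫ σ₃') ≫ (c.ι.app j).τ₃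
      rw [Category.assoc, ← (c.ι.app j).comm₂₃, reassoc_of% hσ₂', Category.assoc, hσ₃',
        Category.comp_id]
      rfl)
  refine ⟨k, σ₂' ≫ (F.map u).τ₂, σ₃' ≫ (F.map u).τ₃, ?_, ?_, ?_⟩
  · rw [Category.assoc, w₂, hσ₂']
  · rw [Category.assoc, w₃, hσ₃']
  · change (σ₂' ≫ (F.obj j).g) ≫ (F.map u).τ₃ = (c.pt.g ≫ σ₃') ≫ (F.map u).τ₃ at hu
    simpa [(F.map u).comm₂₃] using hu

variable [Preadditive A]

lemma isCardinalPresentable_X₁_of_isColimit {J : Type v} [SmallCategory J]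
    [IsCardinalFiltered J κ] [HasColimitsOfShape J A] {F : J ⥤ ShortComplex A} {c : Cocone F}
    (hc : IsColimit c) (hF : ∀ j, IsKernelCokernelPair (F.obj j))
    [∀ j, IsCardinalPresentable (F.obj j).X₁ κ] [Mono c.pt.f]
    [IsCardinalPresentable c.pt.X₂ κ] [IsCardinalPresentable c.pt.X₃ κ] :
    IsCardinalPresentable c.pt.X₁ κ := by
  obtain ⟨j, σ₂, σ₃, hσ₂, -, hσ⟩ := exists_sections_of_isColimit (κ := κ) hc
  obtain ⟨(ρ : c.pt.X₁ ⟶ (F.obj j).X₁), hρ⟩ :=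
    KernelFork.IsLimit.lift' (hF j).1.some (c.pt.f ≫ σ₂) (by simp [hσ])
  change ρ ≫ (F.obj j).f = c.pt.f ≫ σ₂ at hρ
  have comm : (c.ι.app j).τ₁ ≫ c.pt.f = (F.obj j).f ≫ (c.ι.app j).τ₂ := (c.ι.app j).comm₁₂
  have hρ' : ρ ≫ (c.ι.app j).τ₁ = 𝟙 _ := by
    rw [← cancel_mono c.pt.f, Category.assoc, comm, reassoc_of% hρ, hσ₂]
    simp
  exact Retract.isCardinalPresentable ⟨ρ, _, hρ'⟩ κ

variable {E : Set (ShortComplex A)}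

lemma IsLocallyCoherent.exists_isColimit (hlc : IsLocallyCoherent κ E)
    (hacc : IsAccessibleCat κ A) {S : ShortComplex A} (hS : S ∈ E) :
    ∃ (J : Type v) (_ : Preorder J) (_ : IsCardinalFiltered J κ) (_ : HasColimitsOfShape J A)
      (F : J ⥤ ShortComplex A) (c : Cocone F) (_ : Nonempty (IsColimit c)), c.pt = S ∧
      ∀ j, F.obj j ∈ E ∧ IsCardinalPresentable (F.obj j).X₁ κ ∧
        IsCardinalPresentable (F.obj j).X₂ κ ∧ IsCardinalPresentable (F.obj j).X₃ κ := by
  obtain ⟨J, _, hJ, F, c, hc, hcS, hF⟩ := (hlc S).1 hS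
  simp only [isPresentable_iff_isCardinalPresentable] at hF
  exact ⟨J, _, hJ.isCardinalFiltered, hacc.hasColimitsOfShape J _ hJ, F, c, hc, hcS, hF⟩

lemma IsLocallyCoherent.isCardinalPresentable_X₁ (hE : IsExactStructure E)
    (hlc : IsLocallyCoherent κ E) (hacc : IsAccessibleCat κ A) {S : ShortComplex A}
    (hS : S ∈ E) [IsCardinalPresentable S.X₂ κ] [IsCardinalPresentable S.X₃ κ] :
    IsCardinalPresentable S.X₁ κ := by
  obtain ⟨J, _, _, _, F, c, ⟨hc⟩, rfl, hF⟩ := hlc.exists_isColimit hacc hS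
  have : Mono c.pt.f := mono_of_isLimit_fork (hE.kerCoker _ hS).1.some
  have (j : J) := (hF j).2.1
  exact isCardinalPresentable_X₁_of_isColimit hc fun j => hE.kerCoker _ (hF j).1

lemma IsExactStructure.isCardinalPresentable_X₂_of_factors [HasBinaryBiproducts A]
    (hE : IsExactStructure E) {S : ShortComplex A} (hS : S ∈ E) {P : A} {i : S.X₁ ⟶ P}
    {π : P ⟶ S.X₃} {w : i ≫ π = 0} (hπ : ShortComplex.mk i π w ∈ E) (p : P ⟶ S.X₂)
    (hp : p ≫ S.g = π) [IsCardinalPresentable S.X₁ κ] [IsCardinalPresentable P κ] :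
    IsCardinalPresentable S.X₂ κ := by
  obtain ⟨W, a, b, sq, -⟩ := hE.pullback_epi S.g ⟨_, S.f, S.zero, hS⟩ π
  have : IsCardinalPresentable W κ :=
    isCardinalPresentable_of_iso (ShortComplex.splittingOfIsLimitOfSection
      (hE.kerCoker _ (hE.mem_of_isPullback hS sq)).1.some (sq.lift (𝟙 P) p (by simp [hp]))
      (sq.lift_fst _ _ _)).isoBinaryBiproduct.symm κ
  exact isCardinalPresentable_of_isColimit_cokernelCofork
    (hE.kerCoker _ (hE.mem_of_isPullback hπ sq.flip)).2.some

theorem IsLocallyCoherent.isCardinalPresentable_X₂ [HasZeroObject A] [HasBinaryBiproducts A]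
    (hE : IsExactStructure E) (hlc : IsLocallyCoherent κ E) (hacc : IsAccessibleCat κ A)
    {S : ShortComplex A} (hS : S ∈ E) [IsCardinalPresentable S.X₁ κ]
    [IsCardinalPresentable S.X₃ κ] : IsCardinalPresentable S.X₂ κ := by
  obtain ⟨J, _, _, _, F, c, ⟨hc⟩, rfl, hF⟩ := hlc.exists_isColimit hacc hS
  obtain ⟨j, (σ : c.pt.X₃ ⟶ (F.obj j).X₃), hσ⟩ :=
    IsCardinalPresentable.exists_hom_of_isColimit (X := c.pt.X₃) κ
      (isColimitOfPreserves ShortComplex.π₃ hc) (𝟙 _)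
  change σ ≫ (c.ι.app j).τ₃ = 𝟙 _ at hσ
  obtain ⟨hT, _, _, _⟩ := hF j
  obtain ⟨C, k, wk, hk, sqC⟩ := hE.exists_kernel_biprod_desc_isPullback hT σ
  have : IsCardinalPresentable C κ := hlc.isCardinalPresentable_X₁ hE hacc hk
  have hχ := hE.mem_of_isPullback hT sqC
  obtain ⟨P, iC, iA, sqP, -⟩ := hE.pushout_mono (Z := c.pt.X₁) _ ⟨_, _, _, hχ⟩ (c.ι.app j).τ₁
  have : IsCardinalPresentable P κ := sqP.isCardinalPresentable
  have comm₁₂ : (c.ι.app j).τ₁ ≫ c.pt.f = (F.obj j).f ≫ (c.ι.app j).τ₂ := (c.ι.app j).comm₁₂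
  have comm₂₃ : (c.ι.app j).τ₂ ≫ c.pt.g = (F.obj j).g ≫ (c.ι.app j).τ₃ := (c.ι.app j).comm₂₃
  have hχ₂ : sqC.lift 0 (F.obj j).f (by simp) ≫ k ≫ biprod.fst = (F.obj j).f :=
    sqC.lift_snd _ _ _
  have hw : k ≫ biprod.fst ≫ (F.obj j).g = k ≫ biprod.snd ≫ σ := by simpa using sqC.w.symm
  refine hE.isCardinalPresentable_X₂_of_factors hS (hE.mem_of_isPushout hχ sqP)
    (sqP.desc (k ≫ biprod.fst ≫ (c.ι.app j).τ₂) c.pt.f (by simp [reassoc_of% hχ₂, comm₁₂])) ?_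
  apply sqP.hom_ext
  · simp [comm₂₃, reassoc_of% hw, hσ]
  · simp

end Coherent

section FullSubcategory

variable {A : Type u} [Category.{v} A] [Preadditive A] (P : ObjectProperty A)
  (E : Set (ShortComplex A))

def restrictToFullSubcategory : Set (ShortComplex P.FullSubcategory) :=
  {S | P.ι.mapShortComplex.obj S ∈ E}

variable {P E}

lemma AdmissibleMonoOf.hom {X Y : P.FullSubcategory} {f : X ⟶ Y}
    (hf : AdmissibleMonoOf (restrictToFullSubcategory P E) f) : AdmissibleMonoOf E f.hom := by
  obtain ⟨Z, g, w, hg⟩ := hf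
  exact ⟨Z.obj, g.hom, congrArg (·.hom) w, hg⟩

lemma AdmissibleEpiOf.hom {Y Z : P.FullSubcategory} {g : Y ⟶ Z}
    (hg : AdmissibleEpiOf (restrictToFullSubcategory P E) g) : AdmissibleEpiOf E g.hom := by
  obtain ⟨X, f, w, hf⟩ := hg
  exact ⟨X.obj, f.hom, congrArg (·.hom) w, hf⟩

lemma admissibleMonoOf_restrictToFullSubcategory {X Y : P.FullSubcategory} (f : X ⟶ Y)
    {Z : A} {g : Y.obj ⟶ Z} {w : f.hom ≫ g = 0} (hg : ShortComplex.mk f.hom g w ∈ E)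
    (hZ : P Z) : AdmissibleMonoOf (restrictToFullSubcategory P E) f :=
  ⟨⟨Z, hZ⟩, ObjectProperty.homMk g, by ext; exact w, hg⟩

lemma admissibleEpiOf_restrictToFullSubcategory {Y Z : P.FullSubcategory} (g : Y ⟶ Z)
    {X : A} {f : X ⟶ Y.obj} {w : f ≫ g.hom = 0} (hf : ShortComplex.mk f g.hom w ∈ E)
    (hX : P X) : AdmissibleEpiOf (restrictToFullSubcategory P E) g :=
  ⟨⟨X, hX⟩, ObjectProperty.homMk f, by ext; exact w, hf⟩

theorem IsExactStructure.restrictToFullSubcategory (hE : IsExactStructure E)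
    (hker : ∀ S ∈ E, P S.X₂ → P S.X₃ → P S.X₁) (hcoker : ∀ S ∈ E, P S.X₁ → P S.X₂ → P S.X₃)
    (hext : ∀ S ∈ E, P S.X₁ → P S.X₃ → P S.X₂) :
    IsExactStructure (restrictToFullSubcategory P E) where
  kerCoker S hS := (hE.kerCoker _ hS).of_map P.ι
  mem_of_iso S T e hS := hE.mem_of_iso _ _ (P.ι.mapShortComplex.mapIso e) hS
  id_mono X := by
    obtain ⟨Z, g, w, hg⟩ := hE.id_mono X.obj
    exact admissibleMonoOf_restrictToFullSubcategory _ hg (hcoker _ hg X.2 X.2)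
  id_epi X := by
    obtain ⟨K, f, w, hf⟩ := hE.id_epi X.obj
    exact admissibleEpiOf_restrictToFullSubcategory _ hf (hker _ hf X.2 X.2)
  mono_comp {X _ Z} f g hf hg := by
    obtain ⟨Q, q, w, hq⟩ := hE.mono_comp _ _ hf.hom hg.hom
    exact admissibleMonoOf_restrictToFullSubcategory _ hq (hcoker _ hq X.2 Z.2)
  epi_comp {X _ Z} f g hf hg := by
    obtain ⟨K, k, w, hk⟩ := hE.epi_comp _ _ hf.hom hg.hom
    exact admissibleEpiOf_restrictToFullSubcategory _ hk (hker _ hk X.2 Z.2)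
  pushout_mono {_ _ Z} f hf h := by
    obtain ⟨W, inl, inr, sq, -⟩ := hE.pushout_mono f.hom hf.hom h.hom
    obtain ⟨Q, q, w, hq⟩ := hf
    have hW := hE.mem_of_isPushout hq sq
    exact ⟨⟨W, hext _ hW Z.2 Q.2⟩, ObjectProperty.homMk inl, ObjectProperty.homMk inr,
      IsPushout.of_map_of_faithful P.ι sq, admissibleMonoOf_restrictToFullSubcategory _ hW Q.2⟩
  pullback_epi {_ _ X} g hg h := by
    obtain ⟨W, fst, snd, sq, -⟩ := hE.pullback_epi g.hom hg.hom h.hom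
    obtain ⟨K, k, w, hk⟩ := hg
    have hW := hE.mem_of_isPullback hk sq
    exact ⟨⟨W, hext _ hW K.2 X.2⟩, ObjectProperty.homMk fst, ObjectProperty.homMk snd,
      IsPullback.of_map_of_faithful P.ι sq, admissibleEpiOf_restrictToFullSubcategory _ hW K.2⟩

end FullSubcategory

end LocCoh

theorem statement_2 (κ : Cardinal.{v}) (hκ : κ.IsRegular)
    (A : Type u) [Category.{v} A] [Preadditive A] [HasFiniteBiproducts A]
    (E : Set (ShortComplex A)) (hacc : IsAccessibleCat κ A)
    (hE : IsExactStructure E) (hlc : IsLocallyCoherent κ E) :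
    (∀ S ∈ E, IsPresentable κ S.X₁ → IsPresentable κ S.X₃ → IsPresentable κ S.X₂)
    ∧ IsExactStructure (restrictSES (κ := κ) E) := by
  have : Fact κ.IsRegular := ⟨hκ⟩
  have : HasBinaryBiproducts A := hasBinaryBiproducts_of_finite_biproducts A
  have hext : ∀ S ∈ E, IsPresentable κ S.X₁ → IsPresentable κ S.X₃ → IsPresentable κ S.X₂ := by
    simp only [isPresentable_iff_isCardinalPresentable]
    intro S hS _ _
    exact hlc.isCardinalPresentable_X₂ hE hacc hS
  refine ⟨hext, hE.restrictToFullSubcategory ?_ ?_ hext⟩ <;>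
    simp only [isPresentable_iff_isCardinalPresentable] <;> intro S hS _ _
  · exact hlc.isCardinalPresentable_X₁ hE hacc hS
  · exact isCardinalPresentable_of_isColimit_cokernelCofork (hE.kerCoker S hS).2.some
end

section
/- In any locally κ-coherent exact structure on a κ-accessible additive category A, the full subcategory A_{<κ} of κ-presentable objects is closed under the kernels of admissible epimorphisms and under the cokernels of admissible monomorphisms in A: if 0→C→D→E→0 is an admissible short exact sequence in A with D and E κ-presentable then C is κ-presentable, and if C and D are κ-presentable then E is κ-presentable. -/
universe w v u

open CategoryTheory CategoryTheory.Limits Opposite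

open LocCoh

/-!
Write `S` as a `κ`-directed colimit of admissible sequences `Sⱼ` with `κ`-presentable terms.
If `S.X₂` and `S.X₃` are `κ`-presentable, their identities factor through a common stage `Sₙ`,
compatibly with `g` after passing to a later stage; the kernel property of `Sₙ` then exhibits
`S.X₁` as a retract of the `κ`-presentable object `Sₙ.X₁`. For cokernels, `Hom(coker f, -)` is
the kernel of `Hom(Y, -) → Hom(X, -)`, and such finite limits commute with `κ`-directed colimits
of sets.
-/

namespace LocCoh

lemma IsCardinalDirected.isDirected {κ : Cardinal.{w}} (hκ : Cardinal.aleph0 ≤ κ) {J : Type w}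
    [Preorder J] (hJ : IsCardinalDirected κ J) : IsDirected J (· ≤ ·) where
  directed a b := by
    obtain ⟨j, hj⟩ := hJ {a, b} ((Cardinal.mk_lt_aleph0_iff.mpr inferInstance).trans_le hκ)
    exact ⟨j, hj a (by simp), hj b (by simp)⟩

section Presentable

variable {A : Type u} [Category.{v} A] {κ : Cardinal.{v}}

lemma IsPresentable.exists_hom_of_isColimit {S : A} (hS : IsPresentable κ S) {J : Type v}
    [Preorder J] (hJ : IsCardinalDirected κ J) {F : J ⥤ A} {c : Cocone F} (hc : IsColimit c)
    (x : S ⟶ c.pt) : ∃ (j : J) (y : S ⟶ F.obj j), y ≫ c.ι.app j = x := by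
  have := (hS J _ hJ).some
  exact Types.jointly_surjective_of_isColimit (isColimitOfPreserves (coyoneda.obj (op S)) hc) x

lemma IsPresentable.exists_eq_of_isColimit (hκ : Cardinal.aleph0 ≤ κ) {S : A}
    (hS : IsPresentable κ S) {J : Type v} [Preorder J] (hJ : IsCardinalDirected κ J)
    {F : J ⥤ A} {c : Cocone F} (hc : IsColimit c) {j : J} (x y : S ⟶ F.obj j)
    (h : x ≫ c.ι.app j = y ≫ c.ι.app j) :
    ∃ (k : J) (f : j ⟶ k), x ≫ F.map f = y ≫ F.map f := by
  have := hJ.isDirected hκ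
  have := (hS J _ hJ).some
  exact (Types.FilteredColimit.isColimit_eq_iff'
    (isColimitOfPreserves (coyoneda.obj (op S)) hc) x y).1 h

lemma isPresentable_of_forall_isColimit (hκ : Cardinal.aleph0 ≤ κ) {S : A}
    (hsurj : ∀ (J : Type v) [Preorder J], IsCardinalDirected κ J → ∀ {F : J ⥤ A} {c : Cocone F},
      IsColimit c → ∀ x : S ⟶ c.pt, ∃ (j : J) (y : S ⟶ F.obj j), y ≫ c.ι.app j = x)
    (hinj : ∀ (J : Type v) [Preorder J], IsCardinalDirected κ J → ∀ {F : J ⥤ A} {c : Cocone F},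
      IsColimit c → ∀ (j : J) (x y : S ⟶ F.obj j), x ≫ c.ι.app j = y ≫ c.ι.app j →
        ∃ (k : J) (f : j ⟶ k), x ≫ F.map f = y ≫ F.map f) :
    IsPresentable κ S := by
  intro J _ hJ
  have := hJ.isDirected hκ
  refine ⟨⟨fun {F} => ⟨fun {c} hc => ⟨Types.FilteredColimit.isColimitOf' _ _ ?_ ?_⟩⟩⟩⟩
  · intro x
    obtain ⟨j, y, hy⟩ := hsurj J hJ hc x
    exact ⟨j, y, hy.symm⟩
  · exact hinj J hJ hc

lemma isPresentable_of_retract (hκ : Cardinal.aleph0 ≤ κ) {X Y : A} (h : Retract Y X)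
    (hX : IsPresentable κ X) : IsPresentable κ Y := by
  refine isPresentable_of_forall_isColimit hκ (fun J _ hJ F c hc x => ?_)
    (fun J _ hJ F c hc j x y hxy => ?_)
  · obtain ⟨j, y, hy⟩ := hX.exists_hom_of_isColimit hJ hc (h.r ≫ x)
    exact ⟨j, h.i ≫ y, by simp [hy]⟩
  · obtain ⟨k, f, hf⟩ := hX.exists_eq_of_isColimit hκ hJ hc (h.r ≫ x) (h.r ≫ y) (by simp [hxy])
    exact ⟨k, f, by simpa [← cancel_epi h.r] using hf⟩

lemma isPresentable_of_isColimit_cokernelCofork [Preadditive A] (hκ : Cardinal.aleph0 ≤ κ)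
    {X Y : A} {f : X ⟶ Y} {q : CokernelCofork f} (hq : IsColimit q) (hX : IsPresentable κ X)
    (hY : IsPresentable κ Y) : IsPresentable κ q.pt := by
  refine isPresentable_of_forall_isColimit hκ (fun J _ hJ F c hc x => ?_)
    (fun J _ hJ F c hc j x y hxy => ?_)
  · obtain ⟨j, y, hy⟩ := hY.exists_hom_of_isColimit hJ hc (q.π ≫ x)
    obtain ⟨k, g, hg⟩ := hX.exists_eq_of_isColimit hκ hJ hc (f ≫ y) 0
      (by simp [hy])
    obtain ⟨z, hz⟩ := CokernelCofork.IsColimit.desc' hq (y ≫ F.map g) (by simpa using hg)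
    refine ⟨k, z, Cofork.IsColimit.hom_ext hq ?_⟩
    simp [reassoc_of% hz, hy]
  · obtain ⟨k, g, hg⟩ := hY.exists_eq_of_isColimit hκ hJ hc (q.π ≫ x) (q.π ≫ y) (by simp [hxy])
    exact ⟨k, g, Cofork.IsColimit.hom_ext hq (by simpa using hg)⟩

end Presentable

section ShortComplex

variable {A : Type u} [Category.{v} A] [Preadditive A]

noncomputable def retractX₁OfSection {S T : ShortComplex A} (φ : T ⟶ S)
    (hT : IsLimit (KernelFork.ofι T.f T.zero)) [Mono S.f] (s : S.X₂ ⟶ T.X₂) (t : S.X₃ ⟶ T.X₃)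
    (hs : s ≫ φ.τ₂ = 𝟙 _) (hst : s ≫ T.g = S.g ≫ t) : Retract S.X₁ T.X₁ where
  i := hT.lift (KernelFork.ofι (S.f ≫ s) (by simp [hst]))
  r := φ.τ₁
  retract := by
    have hlift : hT.lift (KernelFork.ofι (S.f ≫ s) (by simp [hst])) ≫ T.f = S.f ≫ s :=
      Fork.IsLimit.lift_ι hT
    rw [← cancel_mono S.f, Category.assoc, φ.comm₁₂, reassoc_of% hlift]
    simp [hs]

variable {κ : Cardinal.{v}}

lemma exists_compatible_sections_of_isColimit (hκ : Cardinal.aleph0 ≤ κ) {J : Type v}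
    [Preorder J] (hJ : IsCardinalDirected κ J) {F : J ⥤ ShortComplex A} {c : Cocone F}
    (hc₂ : IsColimit (ShortComplex.π₂.mapCocone c))
    (hc₃ : IsColimit (ShortComplex.π₃.mapCocone c))
    (h₂ : IsPresentable κ c.pt.X₂) (h₃ : IsPresentable κ c.pt.X₃) :
    ∃ (n : J) (s : c.pt.X₂ ⟶ (F.obj n).X₂) (t : c.pt.X₃ ⟶ (F.obj n).X₃),
      s ≫ (c.ι.app n).τ₂ = 𝟙 _ ∧ s ≫ (F.obj n).g = c.pt.g ≫ t := by
  have := hJ.isDirected hκ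
  have section_comp {j k : J} (f : j ⟶ k) {s : c.pt.X₂ ⟶ (F.obj j).X₂}
      (hs : s ≫ (c.ι.app j).τ₂ = 𝟙 _) : (s ≫ (F.map f).τ₂) ≫ (c.ι.app k).τ₂ = 𝟙 _ := by
    rw [Category.assoc, ← ShortComplex.comp_τ₂, c.w f, hs]
  obtain ⟨j, s, hs⟩ : ∃ (j : J) (s : c.pt.X₂ ⟶ (F.obj j).X₂), s ≫ (c.ι.app j).τ₂ = 𝟙 _ :=
    h₂.exists_hom_of_isColimit hJ hc₂ (𝟙 _)
  obtain ⟨k, t, ht⟩ : ∃ (k : J) (t : c.pt.X₃ ⟶ (F.obj k).X₃), t ≫ (c.ι.app k).τ₃ = 𝟙 _ :=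
    h₃.exists_hom_of_isColimit hJ hc₃ (𝟙 _)
  obtain ⟨m, hjm, hkm⟩ := directed_of (· ≤ ·) j k
  obtain ⟨s', hs'⟩ : ∃ s' : c.pt.X₂ ⟶ (F.obj m).X₂, s' ≫ (c.ι.app m).τ₂ = 𝟙 _ :=
    ⟨_, section_comp (homOfLE hjm) hs⟩
  obtain ⟨t', ht'⟩ : ∃ t' : c.pt.X₃ ⟶ (F.obj m).X₃, t' ≫ (c.ι.app m).τ₃ = 𝟙 _ :=
    ⟨t ≫ (F.map (homOfLE hkm)).τ₃, by rw [Category.assoc, ← ShortComplex.comp_τ₃, c.w, ht]⟩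
  -- both composites are lifts of `c.pt.g`, so they agree at some later stage
  obtain ⟨n, f, hf⟩ := h₂.exists_eq_of_isColimit hκ hJ hc₃ (s' ≫ (F.obj m).g) (c.pt.g ≫ t') (by
    change (s' ≫ (F.obj m).g) ≫ (c.ι.app m).τ₃ = (c.pt.g ≫ t') ≫ (c.ι.app m).τ₃
    rw [Category.assoc, ← (c.ι.app m).comm₂₃, reassoc_of% hs', Category.assoc, ht']
    simp)
  refine ⟨n, s' ≫ (F.map f).τ₂, t' ≫ (F.map f).τ₃, section_comp f hs', ?_⟩
  rw [Category.assoc, (F.map f).comm₂₃, ← Category.assoc]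
  exact hf.trans (Category.assoc _ _ _)

end ShortComplex

end LocCoh

theorem statement_4_general (κ : Cardinal.{v}) (hκ : κ.IsRegular)
    (A : Type u) [Category.{v} A] [Preadditive A]
    (E : Set (ShortComplex A)) (hacc : IsAccessibleCat κ A)
    (hE : IsExactStructure E) (hlc : IsLocallyCoherent κ E) :
    ∀ S ∈ E, (IsPresentable κ S.X₂ → IsPresentable κ S.X₃ → IsPresentable κ S.X₁)
      ∧ (IsPresentable κ S.X₁ → IsPresentable κ S.X₂ → IsPresentable κ S.X₃) := by
  intro S hS
  obtain ⟨⟨hker⟩, ⟨hcoker⟩⟩ := hE.kerCoker S hS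
  refine ⟨fun h₂ h₃ => ?_, isPresentable_of_isColimit_cokernelCofork hκ.aleph0_le hcoker⟩
  obtain ⟨J, _, hJ, F, c, ⟨hc⟩, rfl, hF⟩ := (hlc S).1 hS
  have := hacc.hasColimitsOfShape J _ hJ
  have : Mono c.pt.f := mono_of_isLimit_fork hker
  obtain ⟨n, s, t, hs, hst⟩ := exists_compatible_sections_of_isColimit hκ.aleph0_le hJ
    (isColimitOfPreserves ShortComplex.π₂ hc) (isColimitOfPreserves ShortComplex.π₃ hc) h₂ h₃
  exact isPresentable_of_retract hκ.aleph0_le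
    (retractX₁OfSection (c.ι.app n) (hE.kerCoker _ (hF n).1).1.some s t hs hst) (hF n).2.1

theorem statement_4 (κ : Cardinal.{v}) (hκ : κ.IsRegular)
    (A : Type u) [Category.{v} A] [Preadditive A] [HasFiniteBiproducts A]
    (E : Set (ShortComplex A)) (hacc : IsAccessibleCat κ A)
    (hE : IsExactStructure E) (hlc : IsLocallyCoherent κ E) :
    ∀ S ∈ E, (IsPresentable κ S.X₂ → IsPresentable κ S.X₃ → IsPresentable κ S.X₁)
      ∧ (IsPresentable κ S.X₁ → IsPresentable κ S.X₂ → IsPresentable κ S.X₃) :=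
  statement_4_general κ hκ A E hacc hE hlc
end

section
/- Let A be a locally κ-coherent exact category and C→D a morphism in A. Then C→D is an admissible monomorphism in A if and only if every morphism in the category of morphisms M²(A) from a morphism S→T with S and T κ-presentable to the morphism C→D factorizes through a morphism U→V that is an admissible monomorphism in the exact category structure on A_{<κ} inherited from A. -/
universe w v u

open CategoryTheory CategoryTheory.Limits Opposite

open LocCoh

/-!
Morphisms of `A` are the objects of `Arrow A`, which plays the role of `M²(A)`. An arrow whose
ends are `κ`-presentable behaves like a `κ`-presentable object of `Arrow A`: maps from it into a
`κ`-directed colimit factor through a stage, essentially uniquely.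

If `i` is an admissible monomorphism, local coherence writes `i` together with its cokernel as a
`κ`-directed colimit of admissible sequences of `κ`-presentable objects, and a map from a
presentable arrow into `i` factors through one of them.

Conversely, presentations of `C` and `D` present `i` as a `κ`-directed colimit of arrows between
presentable objects. By the hypothesis and presentability, every transition map of this diagram
factors through an admissible monomorphism `u` of `A_{<κ}`. Interleaving the diagram with these
factorizations gives a `κ`-directed diagram of such `u`'s with the same colimit `i`. Choosing
cokernels turns it into a diagram of admissible sequences with presentable terms; its colimit is
an admissible sequence starting with `i` by local coherence.
-/

universe v₂ u₂

namespace LocCoh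

variable {κ : Cardinal.{v}}

theorem map_homOfLE_comp {B : Type*} [Category B] {J : Type*} [Preorder J] (F : J ⥤ B)
    {a b c : J} (h₁ : a ≤ b) (h₂ : b ≤ c) :
    F.map (homOfLE h₁) ≫ F.map (homOfLE h₂) = F.map (homOfLE (h₁.trans h₂)) := by
  rw [← F.map_comp, homOfLE_comp]

namespace IsCardinalDirected

variable {J : Type v} [Preorder J]

theorem exists_forall_le (hJ : IsCardinalDirected κ J) {ι : Type v} (hι : Cardinal.mk ι < κ)
    (f : ι → J) : ∃ j, ∀ i, f i ≤ j := by
  obtain ⟨j, hj⟩ := hJ (Set.range f) (Cardinal.mk_range_le.trans_lt hι)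
  exact ⟨j, fun i => hj _ ⟨i, rfl⟩⟩

theorem nonempty (hκ : κ.IsRegular) (hJ : IsCardinalDirected κ J) : Nonempty J := by
  obtain ⟨j, -⟩ := hJ ∅ (by simpa using Cardinal.aleph0_pos.trans_le hκ.aleph0_le)
  exact ⟨j⟩

theorem isDirected_s5 (hκ : κ.IsRegular) (hJ : IsCardinalDirected κ J) :
    IsDirected J (· ≤ ·) := by
  refine ⟨fun a b => ?_⟩
  obtain ⟨j, hj⟩ := hJ {a, b} ((Set.toFinite _).lt_aleph0.trans_le hκ.aleph0_le)
  exact ⟨j, hj a (by simp), hj b (by simp)⟩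

theorem isFiltered (hκ : κ.IsRegular) (hJ : IsCardinalDirected κ J) : IsFiltered J :=
  have := hJ.isDirected_s5 hκ
  have := hJ.nonempty hκ
  inferInstance

end IsCardinalDirected

theorem isCardinalDirected_ord_toType (hκ : κ.IsRegular) :
    IsCardinalDirected κ κ.ord.ToType := by
  intro s hs
  have : ¬ IsCofinal s := fun h => (Order.cof_le h).not_gt
    (by rwa [Ordinal.cof_toType, hκ.cof_ord])
  obtain ⟨x, hx⟩ := not_isCofinal_iff.mp this
  exact ⟨x, fun y hy => (hx y hy).le⟩

namespace IsPresentable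

variable {A : Type u} [Category.{v} A] {J : Type v} [Preorder J] {S : A}

theorem exists_comp_ι_eq (hS : IsPresentable κ S) (hJ : IsCardinalDirected κ J) {F : J ⥤ A}
    {c : Cocone F} (hc : IsColimit c) (f : S ⟶ c.pt) :
    ∃ (j : J) (g : S ⟶ F.obj j), g ≫ c.ι.app j = f := by
  have := (hS J _ hJ).some
  exact Types.jointly_surjective_of_isColimit (isColimitOfPreserves (coyoneda.obj (op S)) hc) f

theorem exists_comp_map_eq (hκ : κ.IsRegular) (hS : IsPresentable κ S)
    (hJ : IsCardinalDirected κ J) {F : J ⥤ A} {c : Cocone F} (hc : IsColimit c) {j : J}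
    {g g' : S ⟶ F.obj j} (h : g ≫ c.ι.app j = g' ≫ c.ι.app j) :
    ∃ (j' : J) (hj : j ≤ j'), g ≫ F.map (homOfLE hj) = g' ≫ F.map (homOfLE hj) := by
  have := hJ.isFiltered hκ
  have := (hS J _ hJ).some
  obtain ⟨j', f, hf⟩ := (Types.FilteredColimit.isColimit_eq_iff'
    (isColimitOfPreserves (coyoneda.obj (op S)) hc) g g').mp h
  exact ⟨j', leOfHom f, hf⟩

end IsPresentable

section ArrowColimits

variable {A : Type u} [Category.{v} A] {J : Type v} [Preorder J] {f : Arrow A}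
  {F : J ⥤ Arrow A} {c : Cocone F} {j j' : J}

theorem arrowCocone_w_left (h : j ⟶ j') :
    (F.map h).left ≫ (c.ι.app j').left = (c.ι.app j).left := by
  rw [← Arrow.comp_left, c.w]

theorem arrowCocone_w_right (h : j ⟶ j') :
    (F.map h).right ≫ (c.ι.app j').right = (c.ι.app j).right := by
  rw [← Arrow.comp_right, c.w]

theorem exists_arrowHom_comp_ι_eq [HasColimitsOfShape J A] (hκ : κ.IsRegular)
    (hJ : IsCardinalDirected κ J) (hl : IsPresentable κ f.left) (hr : IsPresentable κ f.right)
    (hc : IsColimit c) (g : f ⟶ c.pt) : ∃ (j : J) (h : f ⟶ F.obj j), h ≫ c.ι.app j = g := by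
  have := hJ.isDirected_s5 hκ
  have hL := isColimitOfPreserves Arrow.leftFunc hc
  have hR := isColimitOfPreserves Arrow.rightFunc hc
  obtain ⟨j₁, g₁ : f.left ⟶ (F.obj j₁).left, hg₁ : g₁ ≫ (c.ι.app j₁).left = g.left⟩ :=
    hl.exists_comp_ι_eq hJ hL g.left
  obtain ⟨j₂, g₂ : f.right ⟶ (F.obj j₂).right, hg₂ : g₂ ≫ (c.ι.app j₂).right = g.right⟩ :=
    hr.exists_comp_ι_eq hJ hR g.right
  obtain ⟨j₃, h₁, h₂⟩ := exists_ge_ge j₁ j₂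
  have hsq : (g₁ ≫ (F.map (homOfLE h₁)).left ≫ (F.obj j₃).hom) ≫ (c.ι.app j₃).right =
      (f.hom ≫ g₂ ≫ (F.map (homOfLE h₂)).right) ≫ (c.ι.app j₃).right := by
    simp only [Category.assoc, ← Arrow.w, Functor.const_obj_obj, arrowCocone_w_right, hg₂]
    rw [reassoc_of% (arrowCocone_w_left (c := c) (homOfLE h₁)), reassoc_of% hg₁]
  obtain ⟨j₄, h₃, hsq'⟩ := hl.exists_comp_map_eq hκ hJ hR hsq
  refine ⟨j₄, Arrow.homMk (g₁ ≫ (F.map (homOfLE (h₁.trans h₃))).left)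
    (g₂ ≫ (F.map (homOfLE (h₂.trans h₃))).right) ?_, ?_⟩
  · change (_ ≫ (F.map (homOfLE h₃)).right) = (_ ≫ (F.map (homOfLE h₃)).right) at hsq'
    rw [← homOfLE_comp h₁ h₃, ← homOfLE_comp h₂ h₃]
    simpa only [F.map_comp, Arrow.comp_left, Arrow.comp_right, Category.assoc, ← Arrow.w]
      using hsq'
  · ext
    · simp [arrowCocone_w_left, hg₁]
    · simp [arrowCocone_w_right, hg₂]

theorem exists_arrowHom_comp_map_eq [HasColimitsOfShape J A] (hκ : κ.IsRegular)
    (hJ : IsCardinalDirected κ J) (hl : IsPresentable κ f.left) (hr : IsPresentable κ f.right)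
    (hc : IsColimit c) {g g' : f ⟶ F.obj j} (h : g ≫ c.ι.app j = g' ≫ c.ι.app j) :
    ∃ (j' : J) (hj : j ≤ j'), g ≫ F.map (homOfLE hj) = g' ≫ F.map (homOfLE hj) := by
  have := hJ.isDirected_s5 hκ
  have hL : g.left ≫ (c.ι.app j).left = g'.left ≫ (c.ι.app j).left := by
    simpa only [Arrow.comp_left] using congrArg Arrow.Hom.left h
  have hR : g.right ≫ (c.ι.app j).right = g'.right ≫ (c.ι.app j).right := by
    simpa only [Arrow.comp_right] using congrArg Arrow.Hom.right h
  obtain ⟨j₁, h₁, e₁ : g.left ≫ (F.map _).left = g'.left ≫ (F.map _).left⟩ :=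
    hl.exists_comp_map_eq hκ hJ (isColimitOfPreserves Arrow.leftFunc hc) hL
  obtain ⟨j₂, h₂, e₂ : g.right ≫ (F.map _).right = g'.right ≫ (F.map _).right⟩ :=
    hr.exists_comp_map_eq hκ hJ (isColimitOfPreserves Arrow.rightFunc hc) hR
  obtain ⟨j₃, h₁₃, h₂₃⟩ := exists_ge_ge j₁ j₂
  refine ⟨j₃, h₁.trans h₁₃, ?_⟩
  ext
  · rw [← homOfLE_comp h₁ h₁₃]
    simp only [F.map_comp, Arrow.comp_left, reassoc_of% e₁]
  · rw [← homOfLE_comp h₂ h₂₃]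
    simp only [F.map_comp, Arrow.comp_right, reassoc_of% e₂]

end ArrowColimits

section Factorizations

variable {A : Type u} [Category.{v} A] [Preadditive A]

/-- `u` is an admissible monomorphism of `A_{<κ}` with the exact structure inherited from `A`. -/
def IsPresentableAdmissibleMono (κ : Cardinal.{v}) (E : Set (ShortComplex A)) {U V : A}
    (u : U ⟶ V) : Prop :=
  IsPresentable κ U ∧ IsPresentable κ V ∧
    ∃ (W : A) (g : V ⟶ W) (w : u ≫ g = 0), IsPresentable κ W ∧ ShortComplex.mk u g w ∈ E

def FactorsThroughPresentableAdmissibleMonos (κ : Cardinal.{v}) (E : Set (ShortComplex A))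
    (X : Arrow A) : Prop :=
  ∀ f : Arrow A, IsPresentable κ f.left → IsPresentable κ f.right → ∀ g : f ⟶ X,
    ∃ (U V : A) (u : U ⟶ V), IsPresentableAdmissibleMono κ E u ∧
      ∃ (a : f ⟶ Arrow.mk u) (b : Arrow.mk u ⟶ X), a ≫ b = g

@[reducible]
def shortComplexToArrow : ShortComplex A ⥤ Arrow A where
  obj S := Arrow.mk S.f
  map φ := Arrow.homMk φ.τ₁ φ.τ₂ φ.comm₁₂

theorem factorsThroughPresentableAdmissibleMonos_of_isColimitOfPresentableSESs
    (hκ : κ.IsRegular) (hacc : IsAccessibleCat κ A) {E : Set (ShortComplex A)}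
    {S : ShortComplex A} (hS : IsColimitOfPresentableSESs κ E S) :
    FactorsThroughPresentableAdmissibleMonos κ E (Arrow.mk S.f) := by
  obtain ⟨J, _, hJ, F, c, ⟨hc⟩, rfl, hF⟩ := hS
  have := hacc.hasColimitsOfShape J _ hJ
  have hc' : IsColimit (shortComplexToArrow.mapCocone c) :=
    Comma.fstSndJointlyReflectColimit (isColimitOfPreserves ShortComplex.π₁ hc)
      (isColimitOfPreserves ShortComplex.π₂ hc)
  intro f hl hr g
  obtain ⟨j, h, hh⟩ := exists_arrowHom_comp_ι_eq hκ hJ hl hr hc' g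
  obtain ⟨hE, h₁, h₂, h₃⟩ := hF j
  exact ⟨_, _, (F.obj j).f, ⟨h₁, h₂, _, (F.obj j).g, (F.obj j).zero, h₃, hE⟩, h, _, hh⟩

theorem exists_factorization_through_presentableAdmissibleMono (hκ : κ.IsRegular)
    {E : Set (ShortComplex A)} {P : Type v} [Preorder P] [HasColimitsOfShape P A]
    (hP : IsCardinalDirected κ P) {F : P ⥤ Arrow A} {c : Cocone F} (hc : IsColimit c)
    (hF : ∀ p, IsPresentable κ (F.obj p).left ∧ IsPresentable κ (F.obj p).right)
    (H : FactorsThroughPresentableAdmissibleMonos κ E c.pt) (p : P) :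
    ∃ (p' : P) (hp : p ≤ p') (U V : A) (u : U ⟶ V), IsPresentableAdmissibleMono κ E u ∧
      ∃ (a : F.obj p ⟶ Arrow.mk u) (b : Arrow.mk u ⟶ F.obj p'), a ≫ b = F.map (homOfLE hp) := by
  have := hP.isDirected_s5 hκ
  obtain ⟨U, V, u, hu, a, b, hab⟩ := H (F.obj p) (hF p).1 (hF p).2 (c.ι.app p)
  obtain ⟨p₁, b₁, hb₁⟩ := exists_arrowHom_comp_ι_eq hκ hP hu.1 hu.2.1 hc b
  obtain ⟨p₂, hp₂, hp₁₂⟩ := exists_ge_ge p p₁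
  have hagree : (a ≫ b₁ ≫ F.map (homOfLE hp₁₂)) ≫ c.ι.app p₂ =
      F.map (homOfLE hp₂) ≫ c.ι.app p₂ := by
    simp only [Category.assoc, c.w, hb₁, hab]
  obtain ⟨p₃, hp₂₃, heq⟩ := exists_arrowHom_comp_map_eq hκ hP (hF p).1 (hF p).2 hc hagree
  refine ⟨p₃, hp₂.trans hp₂₃, U, V, u, hu, a, b₁ ≫ F.map (homOfLE (hp₁₂.trans hp₂₃)), ?_⟩
  simpa only [Category.assoc, map_homOfLE_comp] using heq

end Factorizations

section StageArrows

variable {A : Type u} [Category.{v} A] {J K : Type v} [Preorder J] [Preorder K]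
  {FC : J ⥤ A} {FD : K ⥤ A}

/-- Arrows between stages of two cocones lying over `i`; ordered by compatibility, they index a
presentation of `i` in `Arrow A`. -/
structure StageArrow (cC : Cocone FC) (cD : Cocone FD) (i : cC.pt ⟶ cD.pt) where
  j : J
  k : K
  hom : FC.obj j ⟶ FD.obj k
  w : hom ≫ cD.ι.app k = cC.ι.app j ≫ i

variable {cC : Cocone FC} {cD : Cocone FD} {i : cC.pt ⟶ cD.pt}

namespace StageArrow

instance : Preorder (StageArrow cC cD i) where
  le x y := ∃ (hj : x.j ≤ y.j) (hk : x.k ≤ y.k),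
    FC.map (homOfLE hj) ≫ y.hom = x.hom ≫ FD.map (homOfLE hk)
  le_refl x := ⟨le_rfl, le_rfl, by simp [homOfLE_refl]⟩
  le_trans x y z := by
    rintro ⟨hj, hk, hxy⟩ ⟨hj', hk', hyz⟩
    refine ⟨hj.trans hj', hk.trans hk', ?_⟩
    rw [← map_homOfLE_comp FC hj hj', Category.assoc, hyz, reassoc_of% hxy, map_homOfLE_comp]

theorem monotone_j : Monotone (StageArrow.j : StageArrow cC cD i → J) := fun _ _ h => h.1

theorem monotone_k : Monotone (StageArrow.k : StageArrow cC cD i → K) := fun _ _ h => h.2.1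

def functor : StageArrow cC cD i ⥤ Arrow A where
  obj x := Arrow.mk x.hom
  map {x y} h := Arrow.homMk (FC.map (homOfLE h.le.1)) (FD.map (homOfLE h.le.2.1)) h.le.2.2
  map_id x := by ext <;> simp [homOfLE_refl]
  map_comp f g := by ext <;> simp [map_homOfLE_comp]

def cocone : Cocone (functor : StageArrow cC cD i ⥤ Arrow A) where
  pt := Arrow.mk i
  ι.app x := Arrow.homMk (cC.ι.app x.j) (cD.ι.app x.k) x.w.symm
  ι.naturality x y h := by
    ext
    · exact (cC.w _).trans (Category.comp_id _).symm
    · exact (cD.w _).trans (Category.comp_id _).symm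

theorem isCardinalDirected (hκ : κ.IsRegular) (hJ : IsCardinalDirected κ J)
    (hK : IsCardinalDirected κ K) (hFC : ∀ j, IsPresentable κ (FC.obj j)) (hcD : IsColimit cD) :
    IsCardinalDirected κ (StageArrow cC cD i) := by
  have := hK.isDirected_s5 hκ
  intro s hs
  obtain ⟨j₀, hj₀⟩ := hJ.exists_forall_le hs fun x : s => x.1.j
  obtain ⟨k₀, hk₀⟩ := hK.exists_forall_le hs fun x : s => x.1.k
  obtain ⟨k₁, χ, hχ⟩ := (hFC j₀).exists_comp_ι_eq hK hcD (cC.ι.app j₀ ≫ i)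
  obtain ⟨k₂, hk₀₂, hk₁₂⟩ := exists_ge_ge k₀ k₁
  have hagree : ∀ x : s, ∃ (k : K) (hk : k₂ ≤ k),
      (FC.map (homOfLE (hj₀ x)) ≫ χ ≫ FD.map (homOfLE hk₁₂)) ≫ FD.map (homOfLE hk) =
        (x.1.hom ≫ FD.map (homOfLE ((hk₀ x).trans hk₀₂))) ≫ FD.map (homOfLE hk) := fun x =>
    (hFC x.1.j).exists_comp_map_eq hκ hK hcD (by
      simp only [Category.assoc, cD.w, hχ, x.1.w, cC.w_assoc])
  choose k hk hagree using hagree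
  obtain ⟨k₃, hk₃⟩ := hK.exists_forall_le hs k
  obtain ⟨k₄, hk₂₄, hk₃₄⟩ := exists_ge_ge k₂ k₃
  refine ⟨⟨j₀, k₄, χ ≫ FD.map (homOfLE (hk₁₂.trans hk₂₄)), by rw [Category.assoc, cD.w, hχ]⟩,
    fun x hx => ⟨hj₀ ⟨x, hx⟩, (hk₀ ⟨x, hx⟩).trans (hk₀₂.trans hk₂₄), ?_⟩⟩
  have := congrArg (· ≫ FD.map (homOfLE ((hk₃ ⟨x, hx⟩).trans hk₃₄))) (hagree ⟨x, hx⟩)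
  simpa only [Category.assoc, map_homOfLE_comp] using this

theorem final_functor_j (hK : IsCardinalDirected κ K)
    (hFC : ∀ j, IsPresentable κ (FC.obj j)) (hcD : IsColimit cD)
    [IsDirectedOrder (StageArrow cC cD i)] :
    (monotone_j : Monotone (StageArrow.j : StageArrow cC cD i → J)).functor.Final := by
  rw [Monotone.final_functor_iff]
  intro j
  obtain ⟨k, φ, hφ⟩ := (hFC j).exists_comp_ι_eq hK hcD (cC.ι.app j ≫ i)
  exact ⟨⟨j, k, φ, hφ⟩, le_rfl⟩

theorem final_functor_k (hκ : κ.IsRegular) (hJ : IsCardinalDirected κ J)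
    (hK : IsCardinalDirected κ K) (hFC : ∀ j, IsPresentable κ (FC.obj j)) (hcD : IsColimit cD)
    [IsDirectedOrder (StageArrow cC cD i)] :
    (monotone_k : Monotone (StageArrow.k : StageArrow cC cD i → K)).functor.Final := by
  have := hK.isDirected_s5 hκ
  rw [Monotone.final_functor_iff]
  intro k
  obtain ⟨j⟩ := hJ.nonempty hκ
  obtain ⟨k₁, φ, hφ⟩ := (hFC j).exists_comp_ι_eq hK hcD (cC.ι.app j ≫ i)
  obtain ⟨k₂, hk, hk₁⟩ := exists_ge_ge k k₁
  exact ⟨⟨j, k₂, φ ≫ FD.map (homOfLE hk₁), by rw [Category.assoc, cD.w, hφ]⟩, hk⟩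

noncomputable def isColimitCocone (hcC : IsColimit cC) (hcD : IsColimit cD)
    [(monotone_j : Monotone (StageArrow.j : StageArrow cC cD i → J)).functor.Final]
    [(monotone_k : Monotone (StageArrow.k : StageArrow cC cD i → K)).functor.Final] :
    IsColimit (cocone : Cocone (functor : StageArrow cC cD i ⥤ Arrow A)) :=
  Comma.fstSndJointlyReflectColimit
    ((Functor.Final.isColimitWhiskerEquiv (monotone_j (i := i)).functor cC).symm hcC)
    ((Functor.Final.isColimitWhiskerEquiv (monotone_k (i := i)).functor cD).symm hcD)

end StageArrow

theorem exists_isColimit_presentableArrows (hκ : κ.IsRegular) (hacc : IsAccessibleCat κ A)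
    {C D : A} (i : C ⟶ D) :
    ∃ (P : Type v) (_ : Preorder P), IsCardinalDirected κ P ∧
      ∃ (F : P ⥤ Arrow A) (c : Cocone F), Nonempty (IsColimit c) ∧ c.pt = Arrow.mk i ∧
        ∀ p, IsPresentable κ (F.obj p).left ∧ IsPresentable κ (F.obj p).right := by
  obtain ⟨G, -, hG, hcolim⟩ := hacc.exists_generators
  obtain ⟨J, _, hJ, FC, cC, ⟨hcC⟩, rfl, hFC⟩ := hcolim C
  obtain ⟨K, _, hK, FD, cD, ⟨hcD⟩, rfl, hFD⟩ := hcolim D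
  have hP := StageArrow.isCardinalDirected hκ hJ hK (fun j => hG _ (hFC j)) hcD (i := i)
  have := hP.isDirected_s5 hκ
  have := StageArrow.final_functor_j hK (fun j => hG _ (hFC j)) hcD (i := i)
  have := StageArrow.final_functor_k hκ hJ hK (fun j => hG _ (hFC j)) hcD (i := i)
  exact ⟨_, _, hP, _, _, ⟨StageArrow.isColimitCocone hcC hcD⟩, rfl,
    fun x => ⟨hG _ (hFC x.j), hG _ (hFD x.k)⟩⟩

end StageArrows

section Refinement

variable {B : Type u₂} [Category.{v₂} B] {P : Type v} [Preorder P]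

structure TransitionFactorization (F : P ⥤ B) where
  next : P → P
  le_next (p : P) : p ≤ next p
  obj : P → B
  toObj (p : P) : F.obj p ⟶ obj p
  fromObj (p : P) : obj p ⟶ F.obj (next p)
  toObj_fromObj (p : P) : toObj p ≫ fromObj p = F.map (homOfLE (le_next p))

namespace TransitionFactorization

variable {F : P ⥤ B} (Φ : TransitionFactorization F) (O : Type v) [LinearOrder O]

structure Index (Φ : TransitionFactorization F) (O : Type v) where
  base : P
  level : O

/-- The level strictly increases along every relation `q ≤ q'` with `q ≠ q'`, so that these never
compose to a nontrivial loop; this is what makes `fromObj ≫ F.map _ ≫ toObj` functorial. -/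
instance : Preorder (Φ.Index O) where
  le q q' := q = q' ∨ (Φ.next q.base ≤ q'.base ∧ q.level < q'.level)
  le_refl _ := Or.inl rfl
  le_trans q q' q'' := by
    rintro (rfl | ⟨hb, hl⟩) (rfl | ⟨hb', hl'⟩)
    · exact Or.inl rfl
    · exact Or.inr ⟨hb', hl'⟩
    · exact Or.inr ⟨hb, hl⟩
    · exact Or.inr ⟨hb.trans ((Φ.le_next _).trans hb'), hl.trans hl'⟩

variable {Φ O}

open Classical in
noncomputable def map {q q' : Φ.Index O} (h : q ≤ q') : Φ.obj q.base ⟶ Φ.obj q'.base :=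
  if e : q = q' then eqToHom (by rw [e])
  else Φ.fromObj q.base ≫ F.map (homOfLE (h.resolve_left e).1) ≫ Φ.toObj q'.base

theorem map_refl (q : Φ.Index O) : Φ.map (le_refl q) = 𝟙 _ := dif_pos rfl

theorem map_of_lt {q q' : Φ.Index O} (h : q ≤ q') (hb : Φ.next q.base ≤ q'.base)
    (hl : q.level < q'.level) :
    Φ.map h = Φ.fromObj q.base ≫ F.map (homOfLE hb) ≫ Φ.toObj q'.base :=
  dif_neg fun e => (e ▸ hl).false

variable (Φ O)

@[reducible, simps]
noncomputable def functor : Φ.Index O ⥤ B where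
  obj q := Φ.obj q.base
  map h := Φ.map h.le
  map_id q := Φ.map_refl q
  map_comp {q q' q''} h h' := by
    rcases h.le with rfl | ⟨hb, hl⟩
    · simp [map_refl]
    rcases h'.le with rfl | ⟨hb', hl'⟩
    · simp [map_refl]
    rw [Φ.map_of_lt _ hb hl, Φ.map_of_lt _ hb' hl',
      Φ.map_of_lt _ (hb.trans ((Φ.le_next _).trans hb')) (hl.trans hl')]
    simp only [Category.assoc, reassoc_of% Φ.toObj_fromObj, ← F.map_comp_assoc, homOfLE_comp]

@[reducible, simps]
noncomputable def cocone (c : Cocone F) : Cocone (Φ.functor O) where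
  pt := c.pt
  ι.app q := Φ.fromObj q.base ≫ c.ι.app (Φ.next q.base)
  ι.naturality {q q'} h := by
    rcases h.le with rfl | ⟨hb, hl⟩
    · simp [map_refl]
    simp [Φ.map_of_lt _ hb hl, reassoc_of% Φ.toObj_fromObj]

variable {Φ O}

theorem toObj_comp_ι (ν : Cocone (Φ.functor O)) {p p' : P} (hp : Φ.next p ≤ p') {x x' : O}
    (hx : x < x') :
    Φ.toObj p ≫ ν.ι.app ⟨p, x⟩ =
      F.map (homOfLE ((Φ.le_next p).trans hp)) ≫ Φ.toObj p' ≫ ν.ι.app ⟨p', x'⟩ := by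
  rw [← ν.w (homOfLE (Or.inr ⟨hp, hx⟩ : (⟨p, x⟩ : Φ.Index O) ≤ ⟨p', x'⟩)), functor_map,
    Φ.map_of_lt _ hp hx]
  simp only [Category.assoc, reassoc_of% Φ.toObj_fromObj, ← F.map_comp_assoc, homOfLE_comp]

theorem isCardinalDirected_index [NoMaxOrder O] (hP : IsCardinalDirected κ P)
    (hO : IsCardinalDirected κ O) : IsCardinalDirected κ (Φ.Index O) := by
  intro s hs
  obtain ⟨p, hp⟩ := hP.exists_forall_le hs fun q : s => Φ.next q.1.base
  obtain ⟨x, hx⟩ := hO.exists_forall_le hs fun q : s => q.1.level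
  obtain ⟨y, hy⟩ := exists_gt x
  exact ⟨⟨p, y⟩, fun q hq => Or.inr ⟨hp ⟨q, hq⟩, (hx ⟨q, hq⟩).trans_lt hy⟩⟩

variable [IsDirectedOrder P] [Nonempty O] [NoMaxOrder O]

@[reducible, simps]
noncomputable def descCocone (ν : Cocone (Φ.functor O)) : Cocone F where
  pt := ν.pt
  ι.app p := Φ.toObj p ≫ ν.ι.app ⟨p, Classical.arbitrary O⟩
  ι.naturality {p p'} h := by
    obtain ⟨q, hq, hq'⟩ := exists_ge_ge (Φ.next p) (Φ.next p')
    obtain ⟨x, hx⟩ := exists_gt (Classical.arbitrary O)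
    dsimp only [Functor.const_obj_obj, Functor.const_obj_map]
    rw [Category.comp_id, toObj_comp_ι ν hq' hx, toObj_comp_ι ν hq hx, ← F.map_comp_assoc]
    rfl

noncomputable def isColimitCocone {c : Cocone F} (hc : IsColimit c) :
    IsColimit (Φ.cocone O c) where
  desc ν := hc.desc (descCocone ν)
  fac ν := by
    rintro ⟨p, x⟩
    obtain ⟨q, hq, hq'⟩ := exists_ge_ge (Φ.next p) (Φ.next (Φ.next p))
    obtain ⟨y, hy⟩ := exists_gt (max x (Classical.arbitrary O))
    rw [max_lt_iff] at hy
    have hw := ν.w (homOfLE (Or.inr ⟨hq, hy.1⟩ : (⟨p, x⟩ : Φ.Index O) ≤ ⟨q, y⟩))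
    rw [functor_map, Φ.map_of_lt _ hq hy.1] at hw
    rw [cocone_ι_app, Category.assoc, hc.fac, descCocone_ι_app, toObj_comp_ι ν hq' hy.2, ← hw]
    simp only [Category.assoc]
  uniq ν m hm := hc.uniq (descCocone ν) m fun p => by
    rw [descCocone_ι_app, ← hm ⟨p, _⟩, cocone_ι_app, ← c.w (homOfLE (Φ.le_next p)),
      ← Φ.toObj_fromObj]
    simp only [Category.assoc]

end TransitionFactorization

end Refinement

section Assembly

variable {A : Type u} [Category.{v} A] [Preadditive A]

section Cokernels

variable {Q : Type*} [Category Q] (R : Q ⥤ Arrow A) {W : Q → A}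
  (g : ∀ q, (R.obj q).right ⟶ W q) (w : ∀ q, (R.obj q).hom ≫ g q = 0)
  (hg : ∀ q, IsColimit (CokernelCofork.ofπ (g q) (w q)))

noncomputable def cokernelMap {q q' : Q} (h : q ⟶ q') : W q ⟶ W q' :=
  (CokernelCofork.IsColimit.desc' (hg q) ((R.map h).right ≫ g q')
    (by rw [← Arrow.w_assoc, w, comp_zero])).1

theorem comp_cokernelMap {q q' : Q} (h : q ⟶ q') :
    g q ≫ cokernelMap R g w hg h = (R.map h).right ≫ g q' :=
  (CokernelCofork.IsColimit.desc' (hg q) _ _).2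

noncomputable def functorOfCokernels : Q ⥤ ShortComplex A where
  obj q := ShortComplex.mk _ (g q) (w q)
  map h :=
    { τ₁ := (R.map h).left
      τ₂ := (R.map h).right
      τ₃ := cokernelMap R g w hg h
      comm₁₂ := Arrow.w (R.map h)
      comm₂₃ := (comp_cokernelMap R g w hg h).symm }
  map_id q := by
    ext
    · simp
    · simp
    · exact Cofork.IsColimit.hom_ext (hg q) (by simp [comp_cokernelMap])
  map_comp {q q' q''} h h' := by
    ext
    · simp
    · simp
    · exact Cofork.IsColimit.hom_ext (hg q)
        (by simp [comp_cokernelMap, reassoc_of% (comp_cokernelMap R g w hg h)])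

end Cokernels

theorem admissibleMonoOf_of_isColimit {E : Set (ShortComplex A)} (hlc : IsLocallyCoherent κ E)
    {Q : Type v} [Preorder Q] [HasColimitsOfShape Q A] (hQ : IsCardinalDirected κ Q)
    {G : Q ⥤ ShortComplex A} (hG : ∀ q, G.obj q ∈ E ∧ IsPresentable κ (G.obj q).X₁ ∧
      IsPresentable κ (G.obj q).X₂ ∧ IsPresentable κ (G.obj q).X₃)
    {c : Cocone (G ⋙ shortComplexToArrow)} (hc : IsColimit c) : AdmissibleMonoOf E c.pt.hom := by
  have hL := isColimitOfPreserves Arrow.leftFunc hc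
  have hR := isColimitOfPreserves Arrow.rightFunc hc
  let cW : Cocone (G ⋙ ShortComplex.π₂) := (Cocone.precompose
    (Functor.whiskerLeft G ShortComplex.π₂Toπ₃)).obj (colimit.cocone (G ⋙ ShortComplex.π₃))
  let g : c.pt.right ⟶ colimit (G ⋙ ShortComplex.π₃) := hR.desc cW
  have hg (q : Q) : (c.ι.app q).right ≫ g = (G.obj q).g ≫ colimit.ι (G ⋙ ShortComplex.π₃) q :=
    hR.fac cW q
  have hf (q : Q) : (c.ι.app q).left ≫ c.pt.hom = (G.obj q).f ≫ (c.ι.app q).right :=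
    Arrow.w (c.ι.app q)
  have hw : c.pt.hom ≫ g = 0 := hL.hom_ext fun q => by
    change (c.ι.app q).left ≫ c.pt.hom ≫ g = (c.ι.app q).left ≫ 0
    rw [reassoc_of% hf q, hg, comp_zero]
    exact ((G.obj q).zero_assoc _).trans zero_comp
  let s : Cocone G :=
    { pt := ShortComplex.mk c.pt.hom g hw
      ι.app q := ⟨(c.ι.app q).left, (c.ι.app q).right, colimit.ι (G ⋙ ShortComplex.π₃) q,
        hf q, hg q⟩
      ι.naturality q q' h := by
        ext
        · simpa using congrArg Arrow.Hom.left (c.w h)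
        · simpa using congrArg Arrow.Hom.right (c.w h)
        · exact (colimit.w (G ⋙ ShortComplex.π₃) h).trans (Category.comp_id _).symm }
  have hs : IsColimit s := ShortComplex.isColimitOfIsColimitπ s hL hR (colimit.isColimit _)
  exact ⟨_, g, hw, (hlc _).mpr ⟨Q, _, hQ, G, s, ⟨hs⟩, rfl, hG⟩⟩

end Assembly

theorem admissibleMonoOf_of_factorsThroughPresentableAdmissibleMonos
    {A : Type u} [Category.{v} A] [Preadditive A] (hκ : κ.IsRegular)
    (hacc : IsAccessibleCat κ A) {E : Set (ShortComplex A)} (hE : IsExactStructure E)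
    (hlc : IsLocallyCoherent κ E) {C D : A} (i : C ⟶ D)
    (H : FactorsThroughPresentableAdmissibleMonos κ E (Arrow.mk i)) : AdmissibleMonoOf E i := by
  obtain ⟨P, _, hP, F, c, ⟨hc⟩, hpt, hF⟩ := exists_isColimit_presentableArrows hκ hacc i
  rw [← hpt] at H
  have := hacc.hasColimitsOfShape P _ hP
  have := hP.isDirected_s5 hκ
  choose next le_next U V u hu a b hab using
    exists_factorization_through_presentableAdmissibleMono hκ hP hc hF H
  choose W g w hW hmem using fun p => (hu p).2.2
  let Φ : TransitionFactorization F := ⟨next, le_next, fun p => Arrow.mk (u p), a, b, hab⟩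
  have := Cardinal.noMaxOrder hκ.aleph0_le
  have := (isCardinalDirected_ord_toType hκ).nonempty hκ
  have hQ := Φ.isCardinalDirected_index hP (isCardinalDirected_ord_toType hκ)
  have := hacc.hasColimitsOfShape _ _ hQ
  have h := admissibleMonoOf_of_isColimit hlc hQ
    (G := functorOfCokernels (Φ.functor κ.ord.ToType) (fun q => g q.base) (fun q => w q.base)
      (fun q => (hE.kerCoker _ (hmem q.base)).2.some))
    (fun q => ⟨hmem q.base, (hu q.base).1, (hu q.base).2.1, hW q.base⟩)
    (Φ.isColimitCocone hc)
  rwa [hpt] at h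

end LocCoh

theorem statement_5_general (κ : Cardinal.{v}) (hκ : κ.IsRegular)
    (A : Type u) [Category.{v} A] [Preadditive A]
    (E : Set (ShortComplex A)) (hacc : IsAccessibleCat κ A)
    (hE : IsExactStructure E) (hlc : IsLocallyCoherent κ E)
    {C D : A} (i : C ⟶ D) :
    AdmissibleMonoOf E i ↔
      ∀ (S T : A), IsPresentable κ S → IsPresentable κ T →
        ∀ (t : S ⟶ T) (c : S ⟶ C) (d : T ⟶ D), c ≫ i = t ≫ d →
          ∃ (U V : A) (u : U ⟶ V), IsPresentable κ U ∧ IsPresentable κ V ∧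
            (∃ (W : A) (g : V ⟶ W) (w : u ≫ g = 0),
              IsPresentable κ W ∧ ShortComplex.mk u g w ∈ E) ∧
            ∃ (a : S ⟶ U) (b : T ⟶ V) (a' : U ⟶ C) (b' : V ⟶ D),
              a ≫ u = t ≫ b ∧ a' ≫ i = u ≫ b' ∧ a ≫ a' = c ∧ b ≫ b' = d := by
  constructor
  · rintro ⟨W, g, w, hmem⟩ S T hS hT t c d hsq
    obtain ⟨U, V, u, ⟨hU, hV, hu⟩, a, b, hab⟩ :=
      factorsThroughPresentableAdmissibleMonos_of_isColimitOfPresentableSESs hκ hacc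
        ((hlc _).mp hmem) (Arrow.mk t) hS hT (Arrow.homMk' c d hsq)
    exact ⟨U, V, u, hU, hV, hu, a.left, a.right, b.left, b.right, a.w, b.w,
      congrArg Arrow.Hom.left hab, congrArg Arrow.Hom.right hab⟩
  · intro H
    refine admissibleMonoOf_of_factorsThroughPresentableAdmissibleMonos hκ hacc hE hlc i
      fun f hl hr g => ?_
    obtain ⟨U, V, u, hU, hV, hu, a, b, a', b', hab, hab', ha, hb⟩ :=
      H f.left f.right hl hr f.hom g.left g.right g.w
    exact ⟨U, V, u, ⟨hU, hV, hu⟩, Arrow.homMk a b hab, Arrow.homMk a' b' hab', by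
      ext
      · exact ha
      · exact hb⟩

theorem statement_5 (κ : Cardinal.{v}) (hκ : κ.IsRegular)
    (A : Type u) [Category.{v} A] [Preadditive A] [HasFiniteBiproducts A]
    (E : Set (ShortComplex A)) (hacc : IsAccessibleCat κ A)
    (hE : IsExactStructure E) (hlc : IsLocallyCoherent κ E)
    {C D : A} (i : C ⟶ D) :
    AdmissibleMonoOf E i ↔
      ∀ (S T : A), IsPresentable κ S → IsPresentable κ T →
        ∀ (t : S ⟶ T) (c : S ⟶ C) (d : T ⟶ D), c ≫ i = t ≫ d →
          ∃ (U V : A) (u : U ⟶ V), IsPresentable κ U ∧ IsPresentable κ V ∧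
            (∃ (W : A) (g : V ⟶ W) (w : u ≫ g = 0),
              IsPresentable κ W ∧ ShortComplex.mk u g w ∈ E) ∧
            ∃ (a : S ⟶ U) (b : T ⟶ V) (a' : U ⟶ C) (b' : V ⟶ D),
              a ≫ u = t ≫ b ∧ a' ≫ i = u ≫ b' ∧ a ≫ a' = c ∧ b ≫ b' = d :=
  statement_5_general κ hκ A E hacc hE hlc i
end
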